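/- arXiv:2105.10291 — 6 statements merged into one kernel-verified Lean document; each statement's English description precedes it below -/
import Mathlib

section
/- If x₁(t) = x(t) + y(t) where (x,y,v,z,w) is a nonnegative solution of the HIV system, and δ = min(d, a) > 0, then x₁ satisfies x₁'(t) ≤ λ - δ x₁(t), and consequently x₁(t) ≤ x₁(0) e^{-δ t} + (λ/δ)(1 - e^{-δ t}) ≤ x₁(0) + λ/δ for all t ≥ 0. -/
/-! The infection terms `β x v` cancel in `(x + y)'`, leaving `λ - d x - a y - p y z ≤ λ - δ (x + y)`;
Grönwall's inequality then compares `x + y` with the solution of `u' = λ - δ u`, `u 0 = x₁ 0`. -/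

open Real

theorem le_linear_ode_solution_of_hasDerivAt_le {f f' : ℝ → ℝ} {lam δ : ℝ} (hδ : δ ≠ 0)
    (hf : ∀ t, 0 ≤ t → HasDerivAt f (f' t) t) (bound : ∀ t, 0 ≤ t → f' t ≤ lam - δ * f t)
    {t : ℝ} (ht : 0 ≤ t) :
    f t ≤ f 0 * exp (-δ * t) + lam / δ * (1 - exp (-δ * t)) := by
  have hgronwall := le_gronwallBound_of_liminf_deriv_right_le (K := -δ) (ε := lam) (b := t)
    (fun s hs => (hf s hs.1).continuousAt.continuousWithinAt)
    (fun s hs _ hr => (hf s hs.1).hasDerivWithinAt.liminf_right_slope_le hr) le_rfl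
    (fun s hs => (bound s hs.1).trans_eq (by ring)) t ⟨ht, le_rfl⟩
  rw [gronwallBound_of_K_ne_0 (neg_ne_zero.2 hδ), sub_zero, div_neg] at hgronwall
  linarith

theorem min_mul_add_le_mul_add_mul {d a x y : ℝ} (hx : 0 ≤ x) (hy : 0 ≤ y) :
    min d a * (x + y) ≤ d * x + a * y := by
  nlinarith [mul_le_mul_of_nonneg_right (min_le_left d a) hx,
    mul_le_mul_of_nonneg_right (min_le_right d a) hy]

theorem hiv_x_plus_y_bound_general
    (lam d beta a p : ℝ)
    (hlam : 0 ≤ lam) (hd : 0 < d) (ha : 0 < a)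
    (hp : 0 ≤ p)
    (x y v z w : ℝ → ℝ)
    (hx : ∀ t, 0 ≤ t → HasDerivAt x (lam - d * x t - beta * x t * v t) t)
    (hy : ∀ t, 0 ≤ t → HasDerivAt y (beta * x t * v t - a * y t - p * y t * z t) t)
    (hpos : ∀ t, 0 ≤ t → 0 ≤ x t ∧ 0 ≤ y t ∧ 0 ≤ v t ∧ 0 ≤ z t ∧ 0 ≤ w t)
    (x₁ : ℝ → ℝ) (hx₁ : ∀ t, x₁ t = x t + y t)
    (δ : ℝ) (hδ : δ = min d a) :
    (∀ t, 0 ≤ t → deriv x₁ t ≤ lam - δ * x₁ t) ∧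
    (∀ t, 0 ≤ t →
      x₁ t ≤ x₁ 0 * exp (-δ * t) + (lam / δ) * (1 - exp (-δ * t)) ∧
      x₁ 0 * exp (-δ * t) + (lam / δ) * (1 - exp (-δ * t)) ≤ x₁ 0 + lam / δ) := by
  have hδ_pos : 0 < δ := hδ ▸ lt_min hd ha
  have hx₁_deriv : ∀ t, 0 ≤ t → HasDerivAt x₁ (lam - d * x t - a * y t - p * y t * z t) t := by
    intro t ht
    rw [funext hx₁]
    exact ((hx t ht).add (hy t ht)).congr_deriv (by ring)
  have hx₁_bound : ∀ t, 0 ≤ t → lam - d * x t - a * y t - p * y t * z t ≤ lam - δ * x₁ t := by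
    intro t ht
    obtain ⟨hxt, hyt, -, hzt, -⟩ := hpos t ht
    rw [hx₁, hδ]
    nlinarith [min_mul_add_le_mul_add_mul (d := d) (a := a) hxt hyt,
      mul_nonneg (mul_nonneg hp hyt) hzt]
  refine ⟨fun t ht => (hx₁_deriv t ht).deriv ▸ hx₁_bound t ht, fun t ht =>
    ⟨le_linear_ode_solution_of_hasDerivAt_le hδ_pos.ne' hx₁_deriv hx₁_bound ht, ?_⟩⟩
  obtain ⟨hx0, hy0, -⟩ := hpos 0 le_rfl
  have hx₁0 : 0 ≤ x₁ 0 := hx₁ 0 ▸ add_nonneg hx0 hy0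
  have hexp_le : exp (-δ * t) ≤ 1 := exp_le_one_iff.2 (by nlinarith)
  nlinarith [exp_pos (-δ * t), div_nonneg hlam hδ_pos.le, mul_le_mul_of_nonneg_left hexp_le hx₁0]

/-- Boundedness of x + y for the HIV system. -/
theorem hiv_x_plus_y_bound
    (lam d beta a p N mu q c h g alpha : ℝ)
    (hlam : 0 ≤ lam) (hd : 0 < d) (hbeta : 0 ≤ beta) (ha : 0 < a)
    (hp : 0 ≤ p) (hN : 0 ≤ N) (hmu : 0 ≤ mu) (hq : 0 ≤ q)
    (hc : 0 ≤ c) (hh : 0 ≤ h) (hg : 0 ≤ g) (halpha : 0 ≤ alpha)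
    (x y v z w : ℝ → ℝ)
    (hx : ∀ t, 0 ≤ t → HasDerivAt x (lam - d * x t - beta * x t * v t) t)
    (hy : ∀ t, 0 ≤ t → HasDerivAt y (beta * x t * v t - a * y t - p * y t * z t) t)
    (hv : ∀ t, 0 ≤ t → HasDerivAt v (a * N * y t - mu * v t - q * v t * w t) t)
    (hz : ∀ t, 0 ≤ t → HasDerivAt z (c * x t * y t * z t - h * z t) t)
    (hw : ∀ t, 0 ≤ t → HasDerivAt w (g * x t * v t * w t - alpha * w t) t)
    (hpos : ∀ t, 0 ≤ t → 0 ≤ x t ∧ 0 ≤ y t ∧ 0 ≤ v t ∧ 0 ≤ z t ∧ 0 ≤ w t)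
    (x₁ : ℝ → ℝ) (hx₁ : ∀ t, x₁ t = x t + y t)
    (δ : ℝ) (hδ : δ = min d a) :
    (∀ t, 0 ≤ t → deriv x₁ t ≤ lam - δ * x₁ t) ∧
    (∀ t, 0 ≤ t →
      x₁ t ≤ x₁ 0 * exp (-δ * t) + (lam / δ) * (1 - exp (-δ * t)) ∧
      x₁ 0 * exp (-δ * t) + (lam / δ) * (1 - exp (-δ * t)) ≤ x₁ 0 + lam / δ) :=
  hiv_x_plus_y_bound_general lam d beta a p hlam hd ha hp x y v z w hx hy hpos x₁ hx₁ δ hδ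
end

section
/- The characteristic polynomial of the Jacobian matrix of the HIV system at the disease-free equilibrium E_f = (λ/d,0,0,0,0) equals (ξ+d)(ξ+α)(ξ+h)(ξ² + (a+μ)ξ + a μ(1 - R₀)), where R₀ = λ N β /(d μ). -/
/-!
Expanding along the first column, `ξ • 1 - J` splits into the diagonal entries `ξ + d`, `ξ + h`,
`ξ + alpha` and the `2 × 2` block of the infected compartments, whose determinant is
`(ξ + a)(ξ + mu) - a N βλ / d`; the constant term becomes `a mu (1 - R₀)` because
`a mu R₀ = a N (βλ / d)` once `mu ≠ 0`.
-/

open Matrix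

theorem det_fin_five_blockTriangular {R : Type*} [CommRing R] (p q r s t u v w : R) :
    !![p, 0, q, 0, 0;
       0, r, s, 0, 0;
       0, t, u, 0, 0;
       0, 0, 0, v, 0;
       0, 0, 0, 0, w].det = p * (r * u - s * t) * v * w := by
  simp [det_succ_column_zero, Fin.sum_univ_succ, Fin.succAbove]
  ring

theorem hiv_charpoly_disease_free_general
    (lam beta a N d mu h alpha : ℝ) (hmu : 0 < mu)
    (R₀ : ℝ) (hR₀ : R₀ = lam * N * beta / (d * mu))
    (J : Matrix (Fin 5) (Fin 5) ℝ)
    (hJ : J = !![-d, 0, -(beta * lam / d), 0, 0;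
                 0, -a, beta * lam / d, 0, 0;
                 0, a * N, -mu, 0, 0;
                 0, 0, 0, -h, 0;
                 0, 0, 0, 0, -alpha]) :
    ∀ ξ : ℝ, (ξ • (1 : Matrix (Fin 5) (Fin 5) ℝ) - J).det =
      (ξ + d) * (ξ + alpha) * (ξ + h) * (ξ ^ 2 + (a + mu) * ξ + a * mu * (1 - R₀)) := by
  intro ξ
  have hξJ : ξ • (1 : Matrix (Fin 5) (Fin 5) ℝ) - J =
      !![ξ + d, 0, beta * lam / d, 0, 0;
         0, ξ + a, -(beta * lam / d), 0, 0;
         0, -(a * N), ξ + mu, 0, 0;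
         0, 0, 0, ξ + h, 0;
         0, 0, 0, 0, ξ + alpha] := by
    subst hJ
    ext i j
    fin_cases i <;> fin_cases j <;> simp [one_apply]
  have hR₀' : a * mu * R₀ = a * N * (beta * lam / d) := by
    rw [hR₀]
    field_simp [hmu.ne']
  rw [hξJ, det_fin_five_blockTriangular]
  linear_combination (ξ + d) * (ξ + alpha) * (ξ + h) * hR₀'

/-- The characteristic polynomial of the Jacobian at the disease-free equilibrium. -/
theorem hiv_charpoly_disease_free
    (lam beta a N d mu h alpha : ℝ) (hd : 0 < d) (hmu : 0 < mu)
    (R₀ : ℝ) (hR₀ : R₀ = lam * N * beta / (d * mu))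
    (J : Matrix (Fin 5) (Fin 5) ℝ)
    (hJ : J = !![-d, 0, -(beta * lam / d), 0, 0;
                 0, -a, beta * lam / d, 0, 0;
                 0, a * N, -mu, 0, 0;
                 0, 0, 0, -h, 0;
                 0, 0, 0, 0, -alpha]) :
    ∀ ξ : ℝ, (ξ • (1 : Matrix (Fin 5) (Fin 5) ℝ) - J).det =
      (ξ + d) * (ξ + alpha) * (ξ + h) * (ξ ^ 2 + (a + mu) * ξ + a * mu * (1 - R₀)) :=
  hiv_charpoly_disease_free_general lam beta a N d mu h alpha hmu R₀ hR₀ J hJ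
end

section
/- Assume λμc - aNβh > 0. Then E₂ = (x₂, y₂, v₂, z₂, 0) with x₂ = (λμc - aNβh)/(dμc), y₂ = dhμ/(λμc - aNβh), v₂ = aNdh/(λμc - aNβh), z₂ = (a/p)(R^{CTL} - 1), where R^{CTL} = (Nβ/μ)·(λμc - aNβh)/(dμc), is an equilibrium of the HIV system provided R^{CTL} ≥ 1. -/
/-! With `w = 0`, the `z`-equation holds exactly when `c x y = h` and the `v`-equation exactly
when `μ v = a N y`. Given these two relations, the `y`-equation reduces to
`p z = a (N β x / μ - 1) = a (R^{CTL} - 1)`, and the `x`-equation to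
`d x = λ - a N β h / (μ c)`; the stated coordinates of `E₂` satisfy all four relations. -/

section HIVEquilibrium

variable {K : Type*} [Field K]

theorem hiv_ctl_product {D d mu c h : K} (hD : D ≠ 0) (hd : d ≠ 0) (hmu : mu ≠ 0) (hc : c ≠ 0) :
    c * (D / (d * mu * c)) * (d * h * mu / D) = h := by
  field_simp

theorem hiv_uninfected_balance {lam d beta a N mu c h x y v : K}
    (hd : d ≠ 0) (hmu : mu ≠ 0) (hc : c ≠ 0)
    (hx : x = (lam * mu * c - a * N * beta * h) / (d * mu * c))
    (hxy : c * x * y = h) (hv : mu * v = a * N * y) :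
    lam - d * x - beta * x * v = 0 := by
  have hdx : d * mu * c * x = lam * mu * c - a * N * beta * h := by
    rw [hx]; field_simp
  have hxv : mu * c * (beta * x * v) = a * N * beta * h := by
    linear_combination beta * c * x * hv + a * N * beta * hxy
  have hmc : mu * c ≠ 0 := mul_ne_zero hmu hc
  apply mul_left_cancel₀ hmc
  linear_combination -hdx - hxv

theorem hiv_infected_balance {beta a p N mu x y v z : K} (hp : p ≠ 0) (hmu : mu ≠ 0)
    (hv : mu * v = a * N * y) (hz : z = (a / p) * (N * beta / mu * x - 1)) :
    beta * x * v - a * y - p * y * z = 0 := by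
  rw [hz]
  field_simp
  linear_combination beta * x * hv

end HIVEquilibrium

theorem hiv_E2_equilibrium_general
    (lam d beta a p N mu q c h g alpha : ℝ)
    (hd : 0 < d)
    (hp : 0 < p) (hmu : 0 < mu)
    (hc : 0 < c)
    (hpos : lam * mu * c - a * N * beta * h > 0)
    (RCTL : ℝ)
    (hRCTL : RCTL = (N * beta / mu) * ((lam * mu * c - a * N * beta * h) / (d * mu * c)))
    (x₂ y₂ v₂ z₂ : ℝ)
    (hx₂ : x₂ = (lam * mu * c - a * N * beta * h) / (d * mu * c))
    (hy₂ : y₂ = d * h * mu / (lam * mu * c - a * N * beta * h))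
    (hv₂ : v₂ = a * N * d * h / (lam * mu * c - a * N * beta * h))
    (hz₂ : z₂ = (a / p) * (RCTL - 1)) :
    lam - d * x₂ - beta * x₂ * v₂ = 0 ∧
    beta * x₂ * v₂ - a * y₂ - p * y₂ * z₂ = 0 ∧
    a * N * y₂ - mu * v₂ - q * v₂ * 0 = 0 ∧
    c * x₂ * y₂ * z₂ - h * z₂ = 0 ∧
    g * x₂ * v₂ * 0 - alpha * 0 = 0 := by
  have hxy : c * x₂ * y₂ = h := by
    rw [hx₂, hy₂]; exact hiv_ctl_product hpos.ne' hd.ne' hmu.ne' hc.ne'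
  have hv : mu * v₂ = a * N * y₂ := by
    rw [hv₂, hy₂]; ring
  refine ⟨hiv_uninfected_balance hd.ne' hmu.ne' hc.ne' hx₂ hxy hv,
    hiv_infected_balance hp.ne' hmu.ne' hv (by rw [hz₂, hRCTL, hx₂]), ?_, ?_, ?_⟩
  · linear_combination -hv
  · linear_combination z₂ * hxy
  · ring

/-- E₂ is an equilibrium of the HIV system. -/
theorem hiv_E2_equilibrium
    (lam d beta a p N mu q c h g alpha : ℝ)
    (hlam : 0 < lam) (hd : 0 < d) (hbeta : 0 < beta) (ha : 0 < a)
    (hp : 0 < p) (hN : 0 < N) (hmu : 0 < mu) (hq : 0 < q)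
    (hc : 0 < c) (hh : 0 < h) (hg : 0 < g) (halpha : 0 < alpha)
    (hpos : lam * mu * c - a * N * beta * h > 0)
    (RCTL : ℝ)
    (hRCTL : RCTL = (N * beta / mu) * ((lam * mu * c - a * N * beta * h) / (d * mu * c)))
    (hRCTL1 : RCTL ≥ 1)
    (x₂ y₂ v₂ z₂ : ℝ)
    (hx₂ : x₂ = (lam * mu * c - a * N * beta * h) / (d * mu * c))
    (hy₂ : y₂ = d * h * mu / (lam * mu * c - a * N * beta * h))
    (hv₂ : v₂ = a * N * d * h / (lam * mu * c - a * N * beta * h))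
    (hz₂ : z₂ = (a / p) * (RCTL - 1)) :
    lam - d * x₂ - beta * x₂ * v₂ = 0 ∧
    beta * x₂ * v₂ - a * y₂ - p * y₂ * z₂ = 0 ∧
    a * N * y₂ - mu * v₂ - q * v₂ * 0 = 0 ∧
    c * x₂ * y₂ * z₂ - h * z₂ = 0 ∧
    g * x₂ * v₂ * 0 - alpha * 0 = 0 :=
  hiv_E2_equilibrium_general lam d beta a p N mu q c h g alpha hd hp hmu hc hpos RCTL hRCTL x₂ y₂ v₂
    z₂ hx₂ hy₂ hv₂ hz₂
end

section
/- Assume λg - αβ > 0. Then E₃ = (x₃, y₃, v₃, 0, w₃) with x₃ = (λg - αβ)/(dg), y₃ = αβ/(ag), v₃ = αd/(λg - αβ), w₃ = (μ/q)(R^W - 1), where R^W = Nβ(λg - αβ)/(μ d g), is an equilibrium of the HIV system provided R^W ≥ 1. -/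
/-! At E₃ the product x₃ v₃ equals α / g, which makes the w-equation vanish and reduces the
x- and y-equations to λ = d x₃ + β α / g and β α / g = a y₃. The v-equation then reads
a N y₃ = μ v₃ R^W, which is how R^W and w₃ are chosen. -/

theorem div_mul_div_cancel_of_ne {K : Type*} [Field K] {S d g : K} (hS : S ≠ 0) (hd : d ≠ 0)
    (hg : g ≠ 0) (α : K) : S / (d * g) * (α * d / S) = α / g := by
  field_simp

theorem hiv_E3_equilibrium_general
    (lam d beta a p N mu q c h g alpha : ℝ)
    (hd : 0 < d) (ha : 0 < a)
    (hmu : 0 < mu) (hq : 0 < q)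
    (hg : 0 < g)
    (hpos : lam * g - alpha * beta > 0)
    (RW : ℝ) (hRW : RW = N * beta * (lam * g - alpha * beta) / (mu * d * g))
    (x₃ y₃ v₃ w₃ : ℝ)
    (hx₃ : x₃ = (lam * g - alpha * beta) / (d * g))
    (hy₃ : y₃ = alpha * beta / (a * g))
    (hv₃ : v₃ = alpha * d / (lam * g - alpha * beta))
    (hw₃ : w₃ = (mu / q) * (RW - 1)) :
    lam - d * x₃ - beta * x₃ * v₃ = 0 ∧
    beta * x₃ * v₃ - a * y₃ - p * y₃ * 0 = 0 ∧
    a * N * y₃ - mu * v₃ - q * v₃ * w₃ = 0 ∧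
    c * x₃ * y₃ * 0 - h * 0 = 0 ∧
    g * x₃ * v₃ * w₃ - alpha * w₃ = 0 := by
  have hxv : x₃ * v₃ = alpha / g := by
    rw [hx₃, hv₃]
    exact div_mul_div_cancel_of_ne hpos.ne' hd.ne' hg.ne' alpha
  have hay : a * y₃ = alpha * beta / g := by
    rw [hy₃]
    field_simp
  have hvw : q * v₃ * w₃ = a * N * y₃ - mu * v₃ := by
    have hmuvRW : mu * v₃ * RW = a * N * y₃ := by
      rw [hRW, hv₃, hy₃]
      field_simp
    rw [hw₃, ← hmuvRW]
    field_simp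
  refine ⟨?_, ?_, by linarith, by ring, ?_⟩
  · rw [mul_assoc beta, hxv, hx₃]
    field_simp
    ring
  · rw [mul_assoc beta, hxv, hay]
    ring
  · rw [mul_assoc g, hxv]
    field_simp
    ring

/-- E₃ is an equilibrium of the HIV system. -/
theorem hiv_E3_equilibrium
    (lam d beta a p N mu q c h g alpha : ℝ)
    (hlam : 0 < lam) (hd : 0 < d) (hbeta : 0 < beta) (ha : 0 < a)
    (hp : 0 < p) (hN : 0 < N) (hmu : 0 < mu) (hq : 0 < q)
    (hc : 0 < c) (hh : 0 < h) (hg : 0 < g) (halpha : 0 < alpha)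
    (hpos : lam * g - alpha * beta > 0)
    (RW : ℝ) (hRW : RW = N * beta * (lam * g - alpha * beta) / (mu * d * g))
    (hRW1 : RW ≥ 1)
    (x₃ y₃ v₃ w₃ : ℝ)
    (hx₃ : x₃ = (lam * g - alpha * beta) / (d * g))
    (hy₃ : y₃ = alpha * beta / (a * g))
    (hv₃ : v₃ = alpha * d / (lam * g - alpha * beta))
    (hw₃ : w₃ = (mu / q) * (RW - 1)) :
    lam - d * x₃ - beta * x₃ * v₃ = 0 ∧
    beta * x₃ * v₃ - a * y₃ - p * y₃ * 0 = 0 ∧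
    a * N * y₃ - mu * v₃ - q * v₃ * w₃ = 0 ∧
    c * x₃ * y₃ * 0 - h * 0 = 0 ∧
    g * x₃ * v₃ * w₃ - alpha * w₃ = 0 :=
  hiv_E3_equilibrium_general lam d beta a p N mu q c h g alpha hd ha hmu hq hg hpos RW hRW x₃ y₃ v₃
    w₃ hx₃ hy₃ hv₃ hw₃
end

section
/- Assume λg - αβ > 0, R₁ = aNhg/(αμc) ≥ 1, and R₂ = αβc(λg - αβ)/(ahdg²) ≥ 1. Then E₄ = (x₄, y₄, v₄, z₄, w₄) with x₄ = (λg - αβ)/(dg), y₄ = hdg/(c(λg - αβ)), v₄ = αd/(λg - αβ), z₄ = (a/p)(R₂ - 1), w₄ = (μ/q)(R₁ - 1), is an equilibrium of the HIV system: all five right-hand sides vanish at E₄. -/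
/-! With `S = λg - αβ`, the point satisfies `g x v = α` and `c x y = h`, which kill the `w`- and
`z`-equations. After substituting `z = (a/p)(R₂ - 1)` and `w = (μ/q)(R₁ - 1)`, the `y`- and
`v`-equations become `β x v = a y R₂` and `a N y = μ v R₁`, and `R₂`, `R₁` are exactly the ratios
that make these hold. -/

namespace HIV

variable {lam d beta a N mu c h g alpha S x y v R₁ R₂ : ℝ}

lemma sub_sub_mul_mul_div_mul_sub_one (b m k u R : ℝ) (hk : k ≠ 0) :
    b - m * u - k * u * (m / k * (R - 1)) = b - m * u * R := by
  field_simp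
  ring

lemma x_equation_eq_zero (hd : d ≠ 0) (hg : g ≠ 0) (hS : lam * g - alpha * beta ≠ 0)
    (hx : x = (lam * g - alpha * beta) / (d * g)) (hv : v = alpha * d / (lam * g - alpha * beta)) :
    lam - d * x - beta * x * v = 0 := by
  subst hx hv
  field_simp
  ring

lemma g_mul_x_mul_v_eq_alpha (hd : d ≠ 0) (hg : g ≠ 0) (hS : S ≠ 0)
    (hx : x = S / (d * g)) (hv : v = alpha * d / S) :
    g * x * v = alpha := by
  subst hx hv
  field_simp

lemma c_mul_x_mul_y_eq_h (hd : d ≠ 0) (hg : g ≠ 0) (hc : c ≠ 0) (hS : S ≠ 0)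
    (hx : x = S / (d * g)) (hy : y = h * d * g / (c * S)) :
    c * x * y = h := by
  subst hx hy
  field_simp

lemma beta_mul_x_mul_v_eq_a_mul_y_mul_R₂ (hd : d ≠ 0) (hg : g ≠ 0) (ha : a ≠ 0) (hh : h ≠ 0)
    (hc : c ≠ 0) (hS : S ≠ 0) (hx : x = S / (d * g)) (hy : y = h * d * g / (c * S))
    (hv : v = alpha * d / S) (hR₂ : R₂ = alpha * beta * c * S / (a * h * d * g ^ 2)) :
    beta * x * v = a * y * R₂ := by
  subst hx hy hv hR₂
  field_simp

lemma a_mul_N_mul_y_eq_mu_mul_v_mul_R₁ (hc : c ≠ 0) (hmu : mu ≠ 0) (halpha : alpha ≠ 0)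
    (hS : S ≠ 0) (hy : y = h * d * g / (c * S)) (hv : v = alpha * d / S)
    (hR₁ : R₁ = a * N * h * g / (alpha * mu * c)) :
    a * N * y = mu * v * R₁ := by
  subst hy hv hR₁
  field_simp

end HIV

open HIV in
theorem hiv_E4_equilibrium_general
    (lam d beta a p N mu q c h g alpha : ℝ)
    (hd : 0 < d) (ha : 0 < a)
    (hp : 0 < p) (hmu : 0 < mu) (hq : 0 < q)
    (hc : 0 < c) (hh : 0 < h) (hg : 0 < g) (halpha : 0 < alpha)
    (hpos : lam * g - alpha * beta > 0)
    (R₁ R₂ : ℝ)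
    (hR₁ : R₁ = a * N * h * g / (alpha * mu * c))
    (hR₂ : R₂ = alpha * beta * c * (lam * g - alpha * beta) / (a * h * d * g ^ 2))
    (x₄ y₄ v₄ z₄ w₄ : ℝ)
    (hx₄ : x₄ = (lam * g - alpha * beta) / (d * g))
    (hy₄ : y₄ = h * d * g / (c * (lam * g - alpha * beta)))
    (hv₄ : v₄ = alpha * d / (lam * g - alpha * beta))
    (hz₄ : z₄ = (a / p) * (R₂ - 1))
    (hw₄ : w₄ = (mu / q) * (R₁ - 1)) :
    lam - d * x₄ - beta * x₄ * v₄ = 0 ∧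
    beta * x₄ * v₄ - a * y₄ - p * y₄ * z₄ = 0 ∧
    a * N * y₄ - mu * v₄ - q * v₄ * w₄ = 0 ∧
    c * x₄ * y₄ * z₄ - h * z₄ = 0 ∧
    g * x₄ * v₄ * w₄ - alpha * w₄ = 0 := by
  have hS := hpos.ne'
  refine ⟨x_equation_eq_zero hd.ne' hg.ne' hS hx₄ hv₄, ?_, ?_, ?_, ?_⟩
  · rw [hz₄, sub_sub_mul_mul_div_mul_sub_one _ _ _ _ _ hp.ne', sub_eq_zero]
    exact beta_mul_x_mul_v_eq_a_mul_y_mul_R₂ hd.ne' hg.ne' ha.ne' hh.ne' hc.ne' hS hx₄ hy₄ hv₄ hR₂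
  · rw [hw₄, sub_sub_mul_mul_div_mul_sub_one _ _ _ _ _ hq.ne', sub_eq_zero]
    exact a_mul_N_mul_y_eq_mu_mul_v_mul_R₁ hc.ne' hmu.ne' halpha.ne' hS hy₄ hv₄ hR₁
  · rw [c_mul_x_mul_y_eq_h hd.ne' hg.ne' hc.ne' hS hx₄ hy₄, sub_self]
  · rw [g_mul_x_mul_v_eq_alpha hd.ne' hg.ne' hS hx₄ hv₄, sub_self]

/-- E₄ is an equilibrium of the HIV system. -/
theorem hiv_E4_equilibrium
    (lam d beta a p N mu q c h g alpha : ℝ)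
    (hlam : 0 < lam) (hd : 0 < d) (hbeta : 0 < beta) (ha : 0 < a)
    (hp : 0 < p) (hN : 0 < N) (hmu : 0 < mu) (hq : 0 < q)
    (hc : 0 < c) (hh : 0 < h) (hg : 0 < g) (halpha : 0 < alpha)
    (hpos : lam * g - alpha * beta > 0)
    (R₁ R₂ : ℝ)
    (hR₁ : R₁ = a * N * h * g / (alpha * mu * c)) (hR₁1 : R₁ ≥ 1)
    (hR₂ : R₂ = alpha * beta * c * (lam * g - alpha * beta) / (a * h * d * g ^ 2))
    (hR₂1 : R₂ ≥ 1)
    (x₄ y₄ v₄ z₄ w₄ : ℝ)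
    (hx₄ : x₄ = (lam * g - alpha * beta) / (d * g))
    (hy₄ : y₄ = h * d * g / (c * (lam * g - alpha * beta)))
    (hv₄ : v₄ = alpha * d / (lam * g - alpha * beta))
    (hz₄ : z₄ = (a / p) * (R₂ - 1))
    (hw₄ : w₄ = (mu / q) * (R₁ - 1)) :
    lam - d * x₄ - beta * x₄ * v₄ = 0 ∧
    beta * x₄ * v₄ - a * y₄ - p * y₄ * z₄ = 0 ∧
    a * N * y₄ - mu * v₄ - q * v₄ * w₄ = 0 ∧
    c * x₄ * y₄ * z₄ - h * z₄ = 0 ∧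
    g * x₄ * v₄ * w₄ - alpha * w₄ = 0 :=
  hiv_E4_equilibrium_general lam d beta a p N mu q c h g alpha hd ha hp hmu hq hc hh hg halpha hpos
    R₁ R₂ hR₁ hR₂ x₄ y₄ v₄ z₄ w₄ hx₄ hy₄ hv₄ hz₄ hw₄
end

section
/- For the cubic ξ³ + A₁ξ² + B₁ξ + C₁ with A₁ = a + μ + dR₀, B₁ = ad + μdR₀ + ad(R₀-1), C₁ = adμ(R₀-1), where a, d, μ > 0 and R₀ > 1, the Routh–Hurwitz conditions A₁ > 0, C₁ > 0, and A₁B₁ - C₁ > 0 hold, hence all roots have negative real part. -/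
/-!
Routh–Hurwitz for a real cubic `p(z) = z³ + A z² + B z + C`. If `p(x + iy) = 0` with `y ≠ 0`, the
imaginary part of `p` forces `y² = 3x² + 2Ax + B`; substituting this into the real part leaves
`8x³ + 8Ax² + 2(A² + B)x + (AB - C) = 0`, which has no root `x ≥ 0` once `A, C > 0` and
`AB > C`. Real roots are excluded because `p` is positive on `[0, ∞)`.

For the cubic at `E₁` one has `B₁ = d R₀ (a + μ)`, so `A₁ B₁ ≥ d R₀ (a + μ)² > a d μ R₀ > C₁`.
-/

namespace Complex

lemma re_cubic (A B C : ℝ) (z : ℂ) :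
    (z ^ 3 + A * z ^ 2 + B * z + C).re =
      z.re ^ 3 - 3 * z.re * z.im ^ 2 + A * (z.re ^ 2 - z.im ^ 2) + B * z.re + C := by
  simp only [pow_succ, pow_zero, one_mul, add_re, mul_re, mul_im, ofReal_re, ofReal_im]
  ring

lemma im_cubic (A B C : ℝ) (z : ℂ) :
    (z ^ 3 + A * z ^ 2 + B * z + C).im =
      z.im * (3 * z.re ^ 2 - z.im ^ 2 + 2 * A * z.re + B) := by
  simp only [pow_succ, pow_zero, one_mul, add_im, mul_re, mul_im, ofReal_re, ofReal_im]
  ring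

theorem re_neg_of_cubic_eq_zero_of_routh_hurwitz {A B C : ℝ} (hA : 0 < A) (hC : 0 < C)
    (hABC : C < A * B) {z : ℂ} (hz : z ^ 3 + A * z ^ 2 + B * z + C = 0) : z.re < 0 := by
  have hB : 0 < B := pos_of_mul_pos_right (hC.trans hABC) hA.le
  have hre := re_cubic A B C z
  have him := im_cubic A B C z
  rw [hz, zero_re] at hre
  rw [hz, zero_im] at him
  by_contra! hx
  rcases eq_or_ne z.im 0 with hy | hy
  · rw [hy] at hre
    nlinarith [pow_nonneg hx 3, mul_nonneg hA.le (sq_nonneg z.re), mul_nonneg hB.le hx]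
  · have hy2 : z.im ^ 2 = 3 * z.re ^ 2 + 2 * A * z.re + B := by
      have := (mul_eq_zero.mp him.symm).resolve_left hy
      linarith
    have hreduced : 8 * z.re ^ 3 + 8 * A * z.re ^ 2 + 2 * (A ^ 2 + B) * z.re + (A * B - C) = 0 := by
      rw [hy2] at hre
      linear_combination hre
    nlinarith [pow_nonneg hx 3, mul_nonneg hA.le (sq_nonneg z.re),
      mul_nonneg (add_pos (sq_pos_of_pos hA) hB).le hx]

end Complex

/-- Routh–Hurwitz conditions hold for the cubic factor at E₁, hence all its roots
have negative real part. -/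
theorem hiv_E1_cubic_stable
    (a d mu R₀ : ℝ) (ha : 0 < a) (hd : 0 < d) (hmu : 0 < mu) (hR₀ : 1 < R₀)
    (A₁ B₁ C₁ : ℝ)
    (hA₁ : A₁ = a + mu + d * R₀)
    (hB₁ : B₁ = a * d + mu * d * R₀ + a * d * (R₀ - 1))
    (hC₁ : C₁ = a * d * mu * (R₀ - 1)) :
    0 < A₁ ∧ 0 < C₁ ∧ A₁ * B₁ - C₁ > 0 ∧
    (∀ ξ : ℂ, ξ ^ 3 + (A₁:ℂ) * ξ ^ 2 + (B₁:ℂ) * ξ + (C₁:ℂ) = 0 → ξ.re < 0) := by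
  have hR₀pos : 0 < R₀ := one_pos.trans hR₀
  have hB₁' : B₁ = d * R₀ * (a + mu) := by rw [hB₁]; ring
  have hA : 0 < A₁ := by rw [hA₁]; positivity
  have hC : 0 < C₁ := by rw [hC₁]; have := sub_pos.mpr hR₀; positivity
  have hABC : C₁ < A₁ * B₁ :=
    calc C₁ < a * d * mu * R₀ := by rw [hC₁]; gcongr; linarith
      _ ≤ d * R₀ * (a + mu) ^ 2 := by
        have : a * mu ≤ (a + mu) ^ 2 := by nlinarith [mul_pos ha hmu]
        calc a * d * mu * R₀ = d * R₀ * (a * mu) := by ring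
          _ ≤ d * R₀ * (a + mu) ^ 2 := by gcongr
      _ ≤ A₁ * B₁ := by
        rw [hA₁, hB₁']
        nlinarith [mul_pos (mul_pos hd hR₀pos) (add_pos ha hmu), mul_pos hd hR₀pos]
  exact ⟨hA, hC, sub_pos.mpr hABC,
    fun ξ hξ => Complex.re_neg_of_cubic_eq_zero_of_routh_hurwitz hA hC hABC hξ⟩
end
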